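/- Let A, B ⊆ ℕ. If the symmetric difference A △ B is not piecewise syndetic, then: A is a set of pointwise recurrence if and only if B is; A is dynamically thick if and only if B is; A is dynamically syndetic if and only if B is; and A is dynamically central syndetic if and only if B is. -/

import Mathlib

/-- The set `A - n`, difference taken inside the positive integers:
`A - n = {m : m >= 1 and m + n ∈ A}`. -/
def NSub (A : Set ℕ) (n : ℕ) : Set ℕ := {m : ℕ | 0 < m ∧ m + n ∈ A}

/-- `S ⊆ ℕ` is thick if every finite subset of `ℕ` has a translate inside `S`. -/
def Thick (S : Set ℕ) : Prop :=
  ∀ F : Finset ℕ, ∃ n : ℕ, 0 < n ∧ ∀ f ∈ F, f + n ∈ S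

/-- `S ⊆ ℕ` is piecewise syndetic if `⋃_{i=1}^{N} (S - i)` is thick for some `N ≥ 1`. -/
def PiecewiseSyndetic (S : Set ℕ) : Prop :=
  ∃ N : ℕ, 0 < N ∧ Thick (⋃ i ∈ Finset.Icc 1 N, NSub S i)

/-- A topological dynamical system: a nonempty compact metric space together with a
continuous self-map. -/
structure MetricDynSystem where
  carrier : Type
  [metric : MetricSpace carrier]
  [cpt : CompactSpace carrier]
  [carrier_nonempty : Nonempty carrier]
  map : carrier → carrier
  continuous_map : Continuous map

attribute [instance] MetricDynSystem.metric MetricDynSystem.cpt MetricDynSystem.carrier_nonempty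

/-- A system is minimal if every point has dense forward orbit `{T^n x : n ∈ ℕ}`. -/
def MetricDynSystem.Minimal (S : MetricDynSystem) : Prop :=
  ∀ x : S.carrier, Dense {y : S.carrier | ∃ n : ℕ, 0 < n ∧ S.map^[n] x = y}

/-- `R(x, U)`: the set of (positive) times at which `x` visits `U`. -/
def RetTimes (S : MetricDynSystem) (x : S.carrier) (U : Set S.carrier) : Set ℕ :=
  {n : ℕ | 0 < n ∧ S.map^[n] x ∈ U}

/-- `A` is a set of pointwise recurrence: for every minimal system, every point `x` and
every open neighborhood `U` of `x`, some `n ∈ A` has `T^n x ∈ U`. -/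
def PointwiseRecurrent (A : Set ℕ) : Prop :=
  ∀ S : MetricDynSystem, S.Minimal →
    ∀ (x : S.carrier) (U : Set S.carrier), IsOpen U → x ∈ U →
      ∃ n ∈ A, 0 < n ∧ S.map^[n] x ∈ U

/-- `A` is dynamically thick: for every minimal system, every point `x` and every
nonempty open `U`, some `n ∈ A` has `T^n x ∈ U`. -/
def DynThick (A : Set ℕ) : Prop :=
  ∀ S : MetricDynSystem, S.Minimal →
    ∀ (x : S.carrier) (U : Set S.carrier), IsOpen U → U.Nonempty →
      ∃ n ∈ A, 0 < n ∧ S.map^[n] x ∈ U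

/-- `A` is dynamically syndetic: it contains a set of return times `R(x, U)` for a
minimal system and a nonempty open `U`. -/
def DynSyndetic (A : Set ℕ) : Prop :=
  ∃ S : MetricDynSystem, S.Minimal ∧
    ∃ (x : S.carrier) (U : Set S.carrier), IsOpen U ∧ U.Nonempty ∧ RetTimes S x U ⊆ A

/-- `A` is dynamically central syndetic: it contains a set of return times `R(x, U)` for
a minimal system and an open `U` containing `x`. -/
def DynCentralSyndetic (A : Set ℕ) : Prop :=
  ∃ S : MetricDynSystem, S.Minimal ∧
    ∃ (x : S.carrier) (U : Set S.carrier), IsOpen U ∧ x ∈ U ∧ RetTimes S x U ⊆ A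


/-!
Each of the four notions can be read off uniformly recurrent `0`-`1` sequences `z`, the positive
support `{n > 0 | z n}` playing the role of a return-time set `R(x, U)`: the itinerary of a point
through a ball whose boundary its orbit misses is such a sequence, and conversely `z` is a point
of the minimal subshift it generates, returning to the cylinder `{w | w 0 = 1}` exactly along its
positive support. So it suffices to show: if `z` is uniformly recurrent, `z m = 1`, `m ∉ D` and
`D` is not piecewise syndetic, then some uniformly recurrent `z'` with `z' m = 1` is supported
in `S := supp z \ D`.

For every `l`, the times `t` with `t + (S ∩ [0, l)) ⊆ S` are syndetic, since they contain the
occurrences of `z[0, l)` in `z` whose window `[t, t + l)` misses `D`, and a syndetic set stays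
syndetic after removing the starting points of the windows of length `l` that meet a set which is
not piecewise syndetic. Starting from the seed `δ_m`, build words in stages: stage `k + 1`
extends the stage-`k` word by a region filled, hierarchically and greedily, with copies of all
earlier stage words, each placed at such a time at bounded distance, and closes with one more copy
of the stage-`k` word. In the limit every stage word recurs with bounded gaps, and every `1` is a
translate of the seed's `1` that stays inside `S`.
-/

def Syndetic (S : Set ℕ) : Prop := ∃ G, ∀ u, ∃ q ∈ S, u ≤ q ∧ q ≤ u + G

theorem Syndetic.mono {S T : Set ℕ} (hS : Syndetic S) (h : S ⊆ T) : Syndetic T :=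
  let ⟨G, hG⟩ := hS
  ⟨G, fun u => let ⟨q, hq, hq'⟩ := hG u; ⟨q, h hq, hq'⟩⟩

theorem Syndetic.nonempty {S : Set ℕ} (hS : Syndetic S) : S.Nonempty :=
  let ⟨_, hG⟩ := hS
  let ⟨q, hq, _⟩ := hG 0
  ⟨q, hq⟩

theorem Syndetic.sep_notMem_window {S D : Set ℕ} (hS : Syndetic S)
    (hD : ¬ PiecewiseSyndetic D) (l : ℕ) : Syndetic {t ∈ S | ∀ i < l, t + i ∉ D} := by
  obtain ⟨G, hG⟩ := hS
  by_contra hns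
  refine hD ⟨G + l + 1, by omega, fun F => ?_⟩
  simp only [Syndetic, not_exists, not_forall, not_and, not_le] at hns
  obtain ⟨u, hu⟩ := hns (F.sup id + G + 2)
  refine ⟨u + 1, by omega, fun f hf => ?_⟩
  have hfF : f ≤ F.sup id := Finset.le_sup (f := id) hf
  obtain ⟨q, hqS, hq₁, hq₂⟩ := hG (f + (u + 1) + 1)
  obtain ⟨i, hi, hqi⟩ : ∃ i < l, q + i ∈ D := by
    by_contra! h
    exact absurd (hu q ⟨hqS, h⟩ (by omega)) (by omega)
  refine Set.mem_iUnion₂.2 ⟨q + i - (f + (u + 1)), Finset.mem_Icc.2 ⟨by omega, by omega⟩,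
    by omega, ?_⟩
  rwa [Nat.add_sub_cancel' (by omega)]

def SyndeticOn (S : Set ℕ) (G a b : ℕ) : Prop :=
  ∀ u, a ≤ u → u < b → ∃ q ∈ S, u ≤ q ∧ q ≤ u + G

section SyndeticOn

variable {S T : Set ℕ} {G a b c : ℕ}

theorem SyndeticOn.union (h₁ : SyndeticOn S G a c) (h₂ : SyndeticOn S G c b) :
    SyndeticOn S G a b := fun u hau hub =>
  (lt_or_ge u c).elim (fun huc => h₁ u hau huc) (fun hcu => h₂ u hcu hub)

theorem SyndeticOn.mono (h : SyndeticOn S G a b) (hST : S ⊆ T) (hb : c ≤ b) :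
    SyndeticOn T G a c := fun u hau huc =>
  let ⟨q, hq, hq'⟩ := h u hau (by omega); ⟨q, hST hq, hq'⟩

theorem syndeticOn_of_le (h : b ≤ a) : SyndeticOn S G a b := fun u _ _ => by omega

theorem syndeticOn_of_mem {q : ℕ} (hq : q ∈ S) (h : q ≤ a + G) : SyndeticOn S G a (q + 1) :=
  fun u hau huq => ⟨q, hq, by omega, by omega⟩

theorem SyndeticOn.add (h : SyndeticOn S G a b) (t : ℕ) (hST : ∀ q ∈ S, t + q ∈ T) :
    SyndeticOn T G (t + a) (t + b) := fun u hau hub => by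
  obtain ⟨q, hq, hq'⟩ := h (u - t) (by omega) (by omega)
  exact ⟨t + q, hST q hq, by omega, by omega⟩

end SyndeticOn

def IsCopy (f W : ℕ → Bool) (t l : ℕ) : Prop := ∀ i < l, f (t + i) = W i

theorem IsCopy.mono {f W : ℕ → Bool} {t l l' : ℕ} (h : IsCopy f W t l) (hl : l' ≤ l) :
    IsCopy f W t l' := fun i hi => h i (by omega)

def splice (t : ℕ) (f g : ℕ → Bool) (n : ℕ) : Bool := if n < t then f n else g n

section Splice

variable {f g W : ℕ → Bool} {s t l : ℕ}

theorem IsCopy.splice_left (h : IsCopy f W s l) (hs : s + l ≤ t) :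
    IsCopy (splice t f g) W s l := fun i hi => by
  rw [splice, if_pos (by omega), h i hi]

theorem IsCopy.splice_right (h : IsCopy g W s l) (hs : t ≤ s) :
    IsCopy (splice t f g) W s l := fun i hi => by
  rw [splice, if_neg (by omega), h i hi]

theorem isCopy_splice_shift : IsCopy (splice (t + l) (fun n => W (n - t)) g) W t l :=
  fun i hi => by rw [splice, if_pos (by omega), Nat.add_sub_cancel_left]

end Splice

def occurrences (z : ℕ → Bool) (l : ℕ) : Set ℕ := {t | IsCopy z z t l}

def UniformlyRecurrent (z : ℕ → Bool) : Prop := ∀ l, Syndetic (occurrences z l)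

def posSupport (z : ℕ → Bool) : Set ℕ := {n | 0 < n ∧ z n = true}

theorem zero_mem_occurrences (z : ℕ → Bool) (l : ℕ) : 0 ∈ occurrences z l :=
  fun i _ => by rw [Nat.zero_add]

theorem occurrences_antitone {z : ℕ → Bool} {l l' : ℕ} (h : l' ≤ l) :
    occurrences z l ⊆ occurrences z l' := fun _ ht => IsCopy.mono ht h

theorem add_mem_occurrences {z : ℕ → Bool} {t q l m : ℕ} (ht : t ∈ occurrences z l)
    (hq : q ∈ occurrences z m) (hql : q + m ≤ l) : t + q ∈ occurrences z m := fun i hi => by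
  rw [Nat.add_assoc, ht (q + i) (by omega), hq i hi]

theorem SyndeticOn.add_occurrences {z : ℕ → Bool} {t l m G b : ℕ} (ht : t ∈ occurrences z l)
    (hml : m ≤ l) (h : SyndeticOn (occurrences z m ∩ Set.Iic (l - m)) G 0 b) :
    SyndeticOn (occurrences z m ∩ Set.Iic (t + l - m)) G t (t + b) := by
  have key : ∀ q ∈ occurrences z m ∩ Set.Iic (l - m),
      t + q ∈ occurrences z m ∩ Set.Iic (t + l - m) := by
    rintro q ⟨hq, hql⟩
    rw [Set.mem_Iic] at hql
    exact ⟨add_mem_occurrences ht hq (by omega), by rw [Set.mem_Iic]; omega⟩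
  simpa using h.add t key

theorem UniformlyRecurrent.syndetic_support {y : ℕ → Bool} (hy : UniformlyRecurrent y) {m : ℕ}
    (hm : y m = true) : Syndetic {n | y n = true} := by
  obtain ⟨G, hG⟩ := hy (m + 1)
  refine ⟨G + m, fun u => ?_⟩
  obtain ⟨q, hq, huq, hqu⟩ := hG u
  exact ⟨q + m, show y (q + m) = true by rw [hq m (by omega), hm], by omega, by omega⟩

def embeddingTimes (S : Set ℕ) (l : ℕ) : Set ℕ := {t | ∀ i < l, i ∈ S → t + i ∈ S}

/-- `next l b` is where, after position `b`, a copy of a prefix of length `l` may be placed. -/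
structure CopyScheme where
  next : ℕ → ℕ → ℕ
  gap : ℕ → ℕ
  lt_next : ∀ l b, b < next l b
  next_le : ∀ l b, next l b ≤ b + gap l
  seedLength : ℕ
  seed : ℕ → Bool

namespace CopyScheme

variable (C : CopyScheme)

def fill (L : ℕ → ℕ) (W : ℕ → Bool) : ℕ → ℕ → ℕ → ℕ → Bool
  | 0, _, _ => fun _ => false
  | k + 1, b, e =>
    if _ : b < C.next (L k) b ∧ C.next (L k) b + L k ≤ e then
      splice (C.next (L k) b) (fill L W k b (C.next (L k) b)) <|
        splice (C.next (L k) b + L k) (fun n => W (n - C.next (L k) b))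
          (fill L W (k + 1) (C.next (L k) b + L k) e)
    else fill L W k b e
termination_by k b e => (e - b, k)
decreasing_by all_goals (simp only [Prod.lex_def, true_and]; omega)

section Fill

variable {C} {L : ℕ → ℕ} {W : ℕ → Bool}

theorem fill_zero {b e : ℕ} : C.fill L W 0 b e = fun _ => false := by
  rw [fill]

theorem fill_succ_of_room {k b e : ℕ} (h : b < C.next (L k) b ∧ C.next (L k) b + L k ≤ e) :
    C.fill L W (k + 1) b e =
      splice (C.next (L k) b) (C.fill L W k b (C.next (L k) b)) (splice (C.next (L k) b + L k)
        (fun n => W (n - C.next (L k) b)) (C.fill L W (k + 1) (C.next (L k) b + L k) e)) := by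
  rw [fill, dif_pos h]

theorem fill_succ_of_not_room {k b e : ℕ}
    (h : ¬(b < C.next (L k) b ∧ C.next (L k) b + L k ≤ e)) :
    C.fill L W (k + 1) b e = C.fill L W k b e := by
  rw [fill, dif_neg h]

theorem mem_of_fill_eq_true {S : Set ℕ} (hnext : ∀ l b, C.next l b ∈ embeddingTimes S l) :
    ∀ k b e, (∀ j < k, ∀ i < L j, W i = true → i ∈ S) →
      ∀ n, C.fill L W k b e n = true → n ∈ S := by
  intro k b e
  induction k, b, e using fill.induct C L with
  | case1 => intro _ n h; simp [fill_zero] at h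
  | case2 k b e hroom ih₁ ih₂ =>
    intro hW n hn
    rw [fill_succ_of_room hroom] at hn
    simp only [splice] at hn
    split_ifs at hn with h₁ h₂
    · exact ih₁ (fun j hj => hW j (by omega)) n hn
    · have := hnext (L k) b (n - C.next (L k) b) (by omega) (hW k (by omega) _ (by omega) hn)
      rwa [Nat.add_sub_cancel' (by omega)] at this
    · exact ih₂ hW n hn
  | case3 k b e hroom ih =>
    intro hW n hn
    rw [fill_succ_of_not_room hroom] at hn
    exact ih (fun j hj => hW j (by omega)) n hn

variable (hL : Monotone L)
include hL

theorem exists_isCopy_fill : ∀ k b e j, j < k → b + C.gap (L j) + L j ≤ e →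
    ∃ t, b < t ∧ t ≤ b + C.gap (L j) + L j ∧ t + L j ≤ e ∧
      IsCopy (C.fill L W k b e) W t (L j) := by
  intro k b e
  induction k, b, e using fill.induct C L with
  | case1 => intro j hj; omega
  | case2 k b e hroom ih₁ _ =>
    intro j hj he
    rw [fill_succ_of_room hroom]
    have hLjk : L j ≤ L k := hL (by omega)
    by_cases hnear : C.next (L k) b ≤ b + C.gap (L j) + L j
    · exact ⟨_, hroom.1, hnear, by omega,
        (isCopy_splice_shift.splice_right le_rfl).mono hLjk⟩
    · have hjk : j < k := by
        by_contra
        have := C.next_le (L k) b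
        have : j = k := by omega
        subst this; omega
      obtain ⟨t, hbt, htb, hte, hcopy⟩ := ih₁ j hjk (by omega)
      exact ⟨t, hbt, htb, by omega, hcopy.splice_left hte⟩
  | case3 k b e hroom ih =>
    intro j hj he
    rw [fill_succ_of_not_room hroom]
    refine ih j ?_ he
    by_contra
    have : j = k := by omega
    subst this
    exact hroom ⟨C.lt_next _ b, by have := C.next_le (L j) b; omega⟩

theorem syndeticOn_fill {S : Set ℕ} {G : ℕ} : ∀ k b e j, j < k → C.gap (L j) + 2 * L j ≤ G →
    (∀ j' t, j ≤ j' → j' < k → b < t → t + L j' ≤ e →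
      IsCopy (C.fill L W k b e) W t (L j') → t ∈ S ∧ SyndeticOn S G t (t + (L j' - L j + 1))) →
    SyndeticOn S G b (e - G) := by
  intro k b e
  induction k, b, e using fill.induct C L with
  | case1 => intro j hj; omega
  | case2 k b e hroom ih₁ ih₂ =>
    intro j hj hG hcopy
    set t := C.next (L k) b with ht
    rw [fill_succ_of_room hroom] at hcopy
    have hLjk : L j ≤ L k := hL (by omega)
    obtain ⟨htS, hinside⟩ := hcopy k t (by omega) (by omega) hroom.1 hroom.2
      (isCopy_splice_shift.splice_right le_rfl)
    have hbefore : SyndeticOn S G b t := by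
      rcases (show j = k ∨ j < k by omega) with rfl | hjk
      · exact (syndeticOn_of_mem htS (by have := C.next_le (L j) b; omega)).mono le_rfl
          (by omega)
      · refine ((ih₁ j hjk hG fun j' t' hj' hj'k hbt' ht' hc => ?_).union
          (syndeticOn_of_mem htS (by omega))).mono le_rfl (by omega)
        exact hcopy j' t' hj' (by omega) hbt' (by omega) (hc.splice_left ht')
    by_cases hrest : t + L k + C.gap (L j) + L j ≤ e
    · obtain ⟨t', ht', ht'b, ht'e, hc⟩ := exists_isCopy_fill hL (k + 1) (t + L k) e j hj hrest
      have ht'S := (hcopy j t' le_rfl hj (by omega) ht'e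
        ((hc.splice_right (by omega)).splice_right (by omega))).1
      have hend : SyndeticOn S G (t + (L k - L j + 1)) (t + L k) :=
        (syndeticOn_of_mem ht'S (a := t + (L k - L j + 1)) (by omega)).mono le_rfl (by omega)
      have hafter := ih₂ j hj hG fun j' t'' hj' hj'k hbt'' ht'' hc =>
        hcopy j' t'' hj' hj'k (by omega) ht''
          ((hc.splice_right (by omega)).splice_right (by omega))
      exact ((hbefore.union hinside).union hend).union hafter
    · exact (hbefore.union hinside).mono le_rfl (by omega)
  | case3 k b e hroom ih =>
    intro j hj hG hcopy
    rw [fill_succ_of_not_room hroom] at hcopy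
    rcases (show j = k ∨ j < k by omega) with rfl | hjk
    · refine syndeticOn_of_le ?_
      have := C.next_le (L j) b
      have : ¬ C.next (L j) b + L j ≤ e := fun h => hroom ⟨C.lt_next _ b, h⟩
      omega
    · exact ih j hjk hG fun j' t hj' hj'k => hcopy j' t hj' (by omega)

end Fill

def length : ℕ → ℕ
  | 0 => C.seedLength
  | k + 1 => C.next (length k) (length k) + length k

def lastCopyStart (k : ℕ) : ℕ := C.next (C.length k) (C.length k)

/-- Ending every stage with a copy of the previous stage word makes each stage word end with all
earlier ones, which supplies the occurrences near the right end of a copy. -/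
def word : ℕ → ℕ → Bool
  | 0 => C.seed
  | k + 1 =>
    splice (C.length k) (word k) <|
      splice (C.lastCopyStart k)
        (C.fill C.length (word k) (k + 1) (C.length k) (C.lastCopyStart k))
        (fun n => word k (n - C.lastCopyStart k))

def limit (n : ℕ) : Bool := C.word (n + 1) n

theorem length_succ (k : ℕ) : C.length (k + 1) = C.lastCopyStart k + C.length k := rfl

theorem length_lt_lastCopyStart (k : ℕ) : C.length k < C.lastCopyStart k := C.lt_next _ _

theorem length_strictMono : StrictMono C.length :=
  strictMono_nat_of_lt_succ fun k => by
    have := C.length_lt_lastCopyStart k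
    rw [length_succ]; omega

theorem length_add_le (j d : ℕ) : C.length j + d ≤ C.length (j + d) := by
  induction d with
  | zero => rfl
  | succ d ih =>
    have := C.length_strictMono (show j + d < j + d + 1 by omega)
    show _ ≤ C.length (j + d + 1)
    omega

theorem word_succ_of_lt {k n : ℕ} (hn : n < C.length k) : C.word (k + 1) n = C.word k n := by
  rw [word, splice, if_pos hn]

theorem word_of_le {k k' n : ℕ} (hk : k ≤ k') (hn : n < C.length k) :
    C.word k' n = C.word k n := by
  induction k', hk using Nat.le_induction with
  | base => rfl
  | succ k' hk ih =>
    rw [C.word_succ_of_lt (lt_of_lt_of_le hn (C.length_strictMono.monotone hk)), ih]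

theorem limit_eq {k n : ℕ} (hn : n < C.length k) : C.limit n = C.word k n := by
  have hn' : n < C.length (n + 1) :=
    lt_of_lt_of_le (Nat.lt_succ_self n) C.length_strictMono.le_apply
  rw [limit, ← C.word_of_le (le_max_right k (n + 1)) hn',
    C.word_of_le (le_max_left k (n + 1)) hn]

theorem lastCopyStart_mem_occurrences (k : ℕ) :
    C.lastCopyStart k ∈ occurrences C.limit (C.length k) := fun i hi => by
  have := C.length_lt_lastCopyStart k
  rw [C.limit_eq (k := k + 1) (by rw [length_succ]; omega), C.limit_eq hi, word, splice,
    if_neg (by omega), splice, if_neg (by omega), Nat.add_sub_cancel_left]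

theorem mem_occurrences_of_isCopy_fill {k t l : ℕ} (hl : l ≤ C.length k)
    (hkt : C.length k ≤ t) (hte : t + l ≤ C.lastCopyStart k)
    (hcopy : IsCopy (C.fill C.length (C.word k) (k + 1) (C.length k) (C.lastCopyStart k))
      (C.word k) t l) :
    t ∈ occurrences C.limit l := fun i hi => by
  rw [C.limit_eq (k := k + 1) (by rw [length_succ]; omega), C.limit_eq (k := k) (by omega),
    word, splice, if_neg (by omega), splice, if_pos (by omega), hcopy i hi]

theorem syndeticOn_occurrences (k : ℕ) :
    ∀ j ≤ k, SyndeticOn (occurrences C.limit (C.length j) ∩ Set.Iic (C.length k - C.length j))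
      (C.gap (C.length j) + 2 * C.length j) 0 (C.length k - C.length j + 1) := by
  induction k using Nat.strong_induction_on with
  | _ k ih =>
  intro j hjk
  rcases hjk.eq_or_lt with rfl | hjk
  · have h0 : 0 ∈ occurrences C.limit (C.length j) ∩ Set.Iic (C.length j - C.length j) :=
      ⟨zero_mem_occurrences _ _, by simp⟩
    exact (syndeticOn_of_mem h0 (by omega)).mono le_rfl (by omega)
  obtain ⟨k, rfl⟩ : ∃ k', k = k' + 1 := ⟨k - 1, by omega⟩
  have hmono := C.length_strictMono.monotone
  have hLj : C.length j ≤ C.length k := hmono (by omega)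
  have hs := C.length_lt_lastCopyStart k
  have hLsucc := C.length_succ k
  set s := C.lastCopyStart k
  set G := C.gap (C.length j) + 2 * C.length j
  set S := occurrences C.limit (C.length j) ∩ Set.Iic (C.length (k + 1) - C.length j)
  have hsS : s ∈ S :=
    ⟨occurrences_antitone hLj (C.lastCopyStart_mem_occurrences k), by simp; omega⟩
  have h₁ : SyndeticOn S G 0 (C.length k - C.length j + 1) :=
    (ih k (by omega) j (by omega)).mono
      (Set.inter_subset_inter_right _ (Set.Iic_subset_Iic.2 (by omega))) le_rfl
  -- past the last occurrence inside the stage-`k` prefix, the next one is the first copy in the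
  -- filled region, or the final copy at `s` if that region is short
  have h₂ : SyndeticOn S G (C.length k - C.length j + 1) (C.length k) := by
    by_cases hroom : C.length k + C.gap (C.length j) + C.length j ≤ s
    · obtain ⟨t, hkt, htb, hts, hc⟩ :=
        exists_isCopy_fill hmono (k + 1) (C.length k) s j (by omega) hroom
      have htS : t ∈ S :=
        ⟨C.mem_occurrences_of_isCopy_fill hLj hkt.le hts hc, by simp; omega⟩
      exact (syndeticOn_of_mem htS (a := C.length k - C.length j + 1) (by omega)).mono le_rfl
        (by omega)
    · exact (syndeticOn_of_mem hsS (a := C.length k - C.length j + 1) (by omega)).mono le_rfl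
        (by omega)
  have h₃ : SyndeticOn S G (C.length k) (s - G) :=
    syndeticOn_fill hmono (k + 1) (C.length k) s j (by omega) le_rfl
      fun j' t hj' hj'k hkt hts hc => by
        have ht := C.mem_occurrences_of_isCopy_fill (hmono (by omega : j' ≤ k)) hkt.le hts hc
        refine ⟨⟨occurrences_antitone (hmono hj') ht, by simp; omega⟩, ?_⟩
        exact ((ih j' (by omega) j hj').add_occurrences ht (hmono hj')).mono
          (Set.inter_subset_inter_right _ (Set.Iic_subset_Iic.2 (by omega))) le_rfl
  have h₄ : SyndeticOn S G (s - G) s :=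
    (syndeticOn_of_mem hsS (a := s - G) (by omega)).mono le_rfl (by omega)
  have h₅ : SyndeticOn S G s (s + (C.length k - C.length j + 1)) :=
    ((ih k (by omega) j (by omega)).add_occurrences (C.lastCopyStart_mem_occurrences k)
      hLj).mono (Set.inter_subset_inter_right _ (Set.Iic_subset_Iic.2 (by omega))) le_rfl
  rw [show C.length (k + 1) - C.length j + 1 = s + (C.length k - C.length j + 1) by omega]
  exact (((h₁.union h₂).union h₃).union h₄).union h₅

theorem limit_uniformlyRecurrent : UniformlyRecurrent C.limit := by
  intro l
  refine ⟨C.gap (C.length l) + 2 * C.length l, fun u => ?_⟩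
  have hl : l ≤ C.length l := C.length_strictMono.le_apply
  have hu := C.length_add_le l u
  obtain ⟨q, ⟨hq, _⟩, huq, hqu⟩ :=
    C.syndeticOn_occurrences (l + u) l (by omega) u (by omega) (by omega)
  exact ⟨q, occurrences_antitone hl hq, huq, hqu⟩

variable {S : Set ℕ} (hnext : ∀ l b, C.next l b ∈ embeddingTimes S l)
  (hseed : ∀ n < C.seedLength, C.seed n = true → n ∈ S)
include hnext hseed

theorem mem_of_word_eq_true : ∀ k, ∀ n < C.length k, C.word k n = true → n ∈ S := by
  intro k
  induction k with
  | zero => exact hseed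
  | succ k ih =>
    intro n hn h
    have hmono := C.length_strictMono.monotone
    rw [length_succ] at hn
    simp only [word, splice] at h
    split_ifs at h with h₁ h₂
    · exact ih n h₁ h
    · exact mem_of_fill_eq_true hnext (k + 1) _ _
        (fun j hj i hi => ih i (lt_of_lt_of_le hi (hmono (by omega)))) n h
    · have : C.lastCopyStart k + (n - C.lastCopyStart k) ∈ S :=
        hnext (C.length k) (C.length k) (n - C.lastCopyStart k) (by omega) (ih _ (by omega) h)
      rwa [Nat.add_sub_cancel' (by omega)] at this

theorem mem_of_limit_eq_true (n : ℕ) (h : C.limit n = true) : n ∈ S :=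
  C.mem_of_word_eq_true hnext hseed (n + 1) n
    (lt_of_lt_of_le (Nat.lt_succ_self n) C.length_strictMono.le_apply) h

end CopyScheme

theorem exists_uniformlyRecurrent_of_syndetic_embeddingTimes {S : Set ℕ}
    (hS : ∀ l, Syndetic (embeddingTimes S l)) {m : ℕ} (hm : m ∈ S) :
    ∃ z, UniformlyRecurrent z ∧ z m = true ∧ ∀ n, z n = true → n ∈ S := by
  choose G next hnextS hnext₁ hnext₂ using hS
  let C : CopyScheme :=
    { next := fun l b => next l (b + 1)
      gap := fun l => G l + 1
      lt_next := fun l b => hnext₁ l (b + 1)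
      next_le := fun l b => by have := hnext₂ l (b + 1); omega
      seedLength := m + 1
      seed := fun n => decide (n = m) }
  refine ⟨C.limit, C.limit_uniformlyRecurrent, ?_,
    C.mem_of_limit_eq_true (fun l b => hnextS l (b + 1)) fun n _ h => ?_⟩
  · rw [C.limit_eq (k := 0) (by simp [C, CopyScheme.length])]
    simp [C, CopyScheme.word]
  · simp only [C, decide_eq_true_eq] at h
    rwa [h]

theorem UniformlyRecurrent.exists_eq_true_notMem {y : ℕ → Bool} (hy : UniformlyRecurrent y)
    {m : ℕ} (hm : y m = true) {D : Set ℕ} (hD : ¬ PiecewiseSyndetic D) :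
    ∃ n, y n = true ∧ n ∉ D := by
  obtain ⟨n, hn, hnD⟩ := ((hy.syndetic_support hm).sep_notMem_window hD 1).nonempty
  exact ⟨n, hn, hnD 0 one_pos⟩

theorem UniformlyRecurrent.exists_posSupport_subset_diff {y : ℕ → Bool}
    (hy : UniformlyRecurrent y) {D : Set ℕ} (hD : ¬ PiecewiseSyndetic D) {m : ℕ}
    (hm : y m = true) (hmD : 0 < m → m ∉ D) :
    ∃ z, UniformlyRecurrent z ∧ z m = true ∧ posSupport z ⊆ posSupport y \ D := by
  obtain ⟨z, hz, hzm, hzS⟩ := exists_uniformlyRecurrent_of_syndetic_embeddingTimes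
    (S := {n | y n = true ∧ (0 < n → n ∉ D)})
    (fun l => ((hy l).sep_notMem_window hD l).mono
      fun t ⟨ht, htD⟩ i hi ⟨hyi, _⟩ => ⟨(ht i hi).trans hyi, fun _ => htD i hi⟩)
    ⟨hm, hmD⟩
  exact ⟨z, hz, hzm, fun n ⟨hn, hzn⟩ => ⟨⟨hn, (hzS n hzn).1⟩, (hzS n hzn).2 hn⟩⟩

theorem retTimes_mono {S : MetricDynSystem} {x : S.carrier} {U V : Set S.carrier} (h : U ⊆ V) :
    RetTimes S x U ⊆ RetTimes S x V := fun _ hn => ⟨hn.1, h hn.2⟩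

theorem MetricDynSystem.Minimal.syndetic_retTimes {S : MetricDynSystem} (hM : S.Minimal)
    {V : Set S.carrier} (hV : IsOpen V) (hne : V.Nonempty) (x : S.carrier) :
    Syndetic (RetTimes S x V) := by
  have hcover : Set.univ ⊆ ⋃ n : ℕ, S.map^[n + 1] ⁻¹' V := fun w _ => by
    obtain ⟨_, ⟨n, hn, rfl⟩, hnV⟩ := (hM w).exists_mem_open hV hne
    exact Set.mem_iUnion.2 ⟨n - 1, by rwa [Nat.sub_add_cancel hn]⟩
  obtain ⟨F, hF⟩ := isCompact_univ.elim_finite_subcover _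
    (fun n => hV.preimage (S.continuous_map.iterate (n + 1))) hcover
  refine ⟨F.sup id + 1, fun u => ?_⟩
  obtain ⟨n, hnF, hnV⟩ := Set.mem_iUnion₂.1 (hF (Set.mem_univ (S.map^[u] x)))
  have := Finset.le_sup (f := id) hnF
  refine ⟨n + 1 + u, ⟨by omega, ?_⟩, by omega, by simp only [id] at this; omega⟩
  rwa [Function.iterate_add_apply]

noncomputable def itinerary (S : MetricDynSystem) (x u : S.carrier) (r : ℝ) : ℕ → Bool :=
  fun n => decide (dist (S.map^[n] x) u < r)

theorem posSupport_itinerary (S : MetricDynSystem) (x u : S.carrier) (r : ℝ) :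
    posSupport (itinerary S x u r) = RetTimes S x (Metric.ball u r) := by
  ext n
  simp [posSupport, RetTimes, itinerary]

theorem itinerary_uniformlyRecurrent {S : MetricDynSystem} (hM : S.Minimal) {x u : S.carrier}
    {r : ℝ} (hr : ∀ n, dist (S.map^[n] x) u ≠ r) :
    UniformlyRecurrent (itinerary S x u r) := by
  intro l
  -- returns of `x` to the open set of points whose first `l` steps lie on the same side of the
  -- sphere as those of `x` are occurrences of the first `l` letters
  let side (i : ℕ) : Set S.carrier :=
    if dist (S.map^[i] x) u < r then Metric.ball u r else {p | r < dist p u}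
  have hside : ∀ i, IsOpen (side i) := fun i => by
    unfold side
    split_ifs
    · exact Metric.isOpen_ball
    · exact isOpen_lt continuous_const (continuous_id.dist continuous_const)
  have hsame : ∀ i p, p ∈ side i → (dist p u < r ↔ dist (S.map^[i] x) u < r) :=
    fun i p hp => by
      unfold side at hp
      split_ifs at hp with h
      · exact ⟨fun _ => h, fun _ => hp⟩
      · exact ⟨fun hpu => absurd hp (not_lt.2 hpu.le), fun h' => absurd h' h⟩
  let V := ⋂ i ∈ Finset.range l, S.map^[i] ⁻¹' side i
  have hxV : x ∈ V := Set.mem_iInter₂.2 fun i _ => by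
    show S.map^[i] x ∈ side i
    unfold side
    split_ifs with h
    · exact h
    · exact lt_of_le_of_ne (not_lt.1 h) (hr i).symm
  obtain ⟨G, hG⟩ := hM.syndetic_retTimes
    (isOpen_biInter_finset fun i _ => (hside i).preimage (S.continuous_map.iterate i))
    ⟨x, hxV⟩ x
  refine ⟨G, fun v => ?_⟩
  obtain ⟨q, ⟨_, hqV⟩, hvq, hqv⟩ := hG v
  refine ⟨q, fun i hi => ?_, hvq, hqv⟩
  have := hsame i _ (Set.mem_iInter₂.1 hqV i (Finset.mem_range.2 hi))
  rw [← Function.iterate_add_apply, add_comm] at this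
  simp only [itinerary, this]

theorem exists_ball_uniformlyRecurrent_itinerary {S : MetricDynSystem} (hM : S.Minimal)
    (x : S.carrier) {u : S.carrier} {U : Set S.carrier} (hU : IsOpen U) (hu : u ∈ U) :
    ∃ r > 0, Metric.ball u r ⊆ U ∧ UniformlyRecurrent (itinerary S x u r) := by
  obtain ⟨ε, hε, hball⟩ := Metric.isOpen_iff.1 hU u hu
  -- a radius avoiding the countably many distances `dist (T^n x) u`
  obtain ⟨r, hr, hr0, hrε⟩ :=
    ((Set.countable_range fun n => dist (S.map^[n] x) u).dense_compl ℝ).exists_between hε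
  exact ⟨r, hr0, (Metric.ball_subset_ball hrε.le).trans hball,
    itinerary_uniformlyRecurrent hM fun n h => hr ⟨n, h⟩⟩

theorem MetricDynSystem.Minimal.exists_iterate_mem_ball {S : MetricDynSystem} (hM : S.Minimal)
    (x u : S.carrier) {r : ℝ} (hr : 0 < r) : ∃ m, S.map^[m] x ∈ Metric.ball u r := by
  obtain ⟨_, ⟨m, -, rfl⟩, hm⟩ :=
    (hM x).exists_mem_open Metric.isOpen_ball ⟨u, Metric.mem_ball_self hr⟩
  exact ⟨m, hm⟩

section Subshift

attribute [local instance] PiNat.metricSpace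

def shift (z : ℕ → Bool) : ℕ → Bool := fun n => z (n + 1)

theorem shift_iterate_apply (z : ℕ → Bool) (k n : ℕ) : shift^[k] z n = z (n + k) := by
  induction k generalizing z with
  | zero => rfl
  | succ k ih => rw [Function.iterate_succ_apply, ih]; rfl

def subshift (y : ℕ → Bool) : Set (ℕ → Bool) :=
  {z | ∀ l, ∃ k, ∀ i < l, z i = y (k + i)}

theorem mem_subshift_self (y : ℕ → Bool) : y ∈ subshift y :=
  fun _ => ⟨0, fun i _ => by rw [Nat.zero_add]⟩

theorem shift_mem_subshift {y z : ℕ → Bool} (hz : z ∈ subshift y) : shift z ∈ subshift y :=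
  fun l => by
    obtain ⟨k, hk⟩ := hz (l + 1)
    exact ⟨k + 1, fun i hi => by rw [shift, hk (i + 1) (by omega), Nat.add_right_comm]; rfl⟩

theorem isClosed_subshift (y : ℕ → Bool) : IsClosed (subshift y) := by
  refine isOpen_compl_iff.1 (isOpen_iff_forall_mem_open.2 fun z hz => ?_)
  obtain ⟨l, hl⟩ := not_forall.1 hz
  refine ⟨PiNat.cylinder z l, fun w hw hwy => hl ?_, PiNat.isOpen_cylinder _ z l,
    PiNat.self_mem_cylinder z l⟩
  obtain ⟨k, hk⟩ := hwy l
  exact ⟨k, fun i hi => (hw i hi).symm.trans (hk i hi)⟩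

noncomputable def subshiftSystem (y : ℕ → Bool) : MetricDynSystem where
  carrier := subshift y
  cpt := isCompact_iff_compactSpace.1 (isClosed_subshift y).isCompact
  carrier_nonempty := ⟨⟨y, mem_subshift_self y⟩⟩
  map z := ⟨shift z.1, shift_mem_subshift z.2⟩
  continuous_map :=
    ((continuous_pi fun n => continuous_apply (n + 1)).comp continuous_subtype_val).subtype_mk _

def subshiftPoint (y : ℕ → Bool) : (subshiftSystem y).carrier := ⟨y, mem_subshift_self y⟩

def subshiftCylinder (y : ℕ → Bool) : Set (subshiftSystem y).carrier := {w | w.1 0 = true}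

theorem subshiftSystem_iterate_val (y : ℕ → Bool) (n : ℕ) (z : (subshiftSystem y).carrier) :
    ((subshiftSystem y).map^[n] z).1 = shift^[n] z.1 := by
  induction n generalizing z with
  | zero => rfl
  | succ n ih => rw [Function.iterate_succ_apply, Function.iterate_succ_apply, ih]; rfl

theorem iterate_subshiftPoint_mem_subshiftCylinder_iff (y : ℕ → Bool) (n : ℕ) :
    (subshiftSystem y).map^[n] (subshiftPoint y) ∈ subshiftCylinder y ↔ y n = true := by
  show ((subshiftSystem y).map^[n] (subshiftPoint y)).1 0 = true ↔ _
  rw [subshiftSystem_iterate_val, shift_iterate_apply, Nat.zero_add]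
  rfl

theorem isOpen_subshiftCylinder (y : ℕ → Bool) : IsOpen (subshiftCylinder y) :=
  show IsOpen ((fun w : (subshiftSystem y).carrier => w.1 0) ⁻¹' {true}) from
    (isOpen_discrete {true}).preimage ((continuous_apply 0).comp continuous_subtype_val)

theorem retTimes_subshiftCylinder (y : ℕ → Bool) :
    RetTimes (subshiftSystem y) (subshiftPoint y) (subshiftCylinder y) = posSupport y := by
  ext n
  exact and_congr_right' (iterate_subshiftPoint_mem_subshiftCylinder_iff y n)

theorem subshiftSystem_minimal {y : ℕ → Bool} (hy : UniformlyRecurrent y) :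
    (subshiftSystem y).Minimal := by
  intro z
  rw [Metric.dense_iff]
  intro w r hr
  obtain ⟨l, hl⟩ : ∃ l : ℕ, (1 / 2 : ℝ) ^ l < r := exists_pow_lt_of_lt_one hr (by norm_num)
  obtain ⟨k, hk⟩ := w.2 l
  obtain ⟨G, hG⟩ := hy (k + l)
  obtain ⟨a, ha⟩ := z.2 (G + k + l + 2)
  obtain ⟨q, hq, haq, hqa⟩ := hG (a + 1)
  -- `z` starts with `y[a, a + G + k + l + 2)`, which contains the copy `y[q, q + k + l)` of
  -- `y[0, k + l)`, and `w` starts with `y[k, k + l)`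
  refine ⟨(subshiftSystem y).map^[q - a + k] z, ?_, q - a + k, by omega, rfl⟩
  change dist ((subshiftSystem y).map^[q - a + k] z).1 w.1 < r
  rw [subshiftSystem_iterate_val]
  refine lt_of_le_of_lt (PiNat.mem_cylinder_iff_dist_le.1 fun i hi => ?_) hl
  rw [shift_iterate_apply, ha _ (by omega), hk i hi, ← hq (k + i) (by omega)]
  congr 1
  omega

end Subshift

theorem dynCentralSyndetic_iff {A : Set ℕ} :
    DynCentralSyndetic A ↔ ∃ z, UniformlyRecurrent z ∧ z 0 = true ∧ posSupport z ⊆ A := by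
  constructor
  · rintro ⟨S, hM, x, U, hU, hxU, hA⟩
    obtain ⟨r, hr, hrU, hz⟩ := exists_ball_uniformlyRecurrent_itinerary hM x hU hxU
    refine ⟨_, hz, by simpa [itinerary] using hr, ?_⟩
    rw [posSupport_itinerary]
    exact (retTimes_mono hrU).trans hA
  · rintro ⟨z, hz, hz0, hA⟩
    exact ⟨_, subshiftSystem_minimal hz, subshiftPoint z, _, isOpen_subshiftCylinder z,
      (iterate_subshiftPoint_mem_subshiftCylinder_iff z 0).2 hz0,
      (retTimes_subshiftCylinder z).le.trans hA⟩

theorem dynSyndetic_iff {A : Set ℕ} :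
    DynSyndetic A ↔ ∃ z, UniformlyRecurrent z ∧ (∃ m, z m = true) ∧ posSupport z ⊆ A := by
  constructor
  · rintro ⟨S, hM, x, U, hU, ⟨u, hu⟩, hA⟩
    obtain ⟨r, hr, hrU, hz⟩ := exists_ball_uniformlyRecurrent_itinerary hM x hU hu
    obtain ⟨m, hm⟩ := hM.exists_iterate_mem_ball x u hr
    refine ⟨_, hz, ⟨m, by simpa [itinerary] using hm⟩, ?_⟩
    rw [posSupport_itinerary]
    exact (retTimes_mono hrU).trans hA
  · rintro ⟨z, hz, ⟨m, hm⟩, hA⟩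
    exact ⟨_, subshiftSystem_minimal hz, subshiftPoint z, _, isOpen_subshiftCylinder z,
      ⟨_, (iterate_subshiftPoint_mem_subshiftCylinder_iff z m).2 hm⟩,
      (retTimes_subshiftCylinder z).le.trans hA⟩

theorem pointwiseRecurrent_iff {A : Set ℕ} :
    PointwiseRecurrent A ↔
      ∀ z, UniformlyRecurrent z → z 0 = true → (A ∩ posSupport z).Nonempty := by
  constructor
  · intro h z hz hz0
    obtain ⟨n, hnA, hn⟩ := h _ (subshiftSystem_minimal hz) (subshiftPoint z) _
      (isOpen_subshiftCylinder z) ((iterate_subshiftPoint_mem_subshiftCylinder_iff z 0).2 hz0)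
    exact ⟨n, hnA, by rwa [← retTimes_subshiftCylinder]⟩
  · intro h S hM x U hU hxU
    obtain ⟨r, hr, hrU, hz⟩ := exists_ball_uniformlyRecurrent_itinerary hM x hU hxU
    obtain ⟨n, hnA, hn⟩ := h _ hz (by simpa [itinerary] using hr)
    rw [posSupport_itinerary] at hn
    exact ⟨n, hnA, hn.1, hrU hn.2⟩

theorem dynThick_iff {A : Set ℕ} :
    DynThick A ↔
      ∀ z, UniformlyRecurrent z → (∃ m, z m = true) → (A ∩ posSupport z).Nonempty := by
  constructor
  · rintro h z hz ⟨m, hm⟩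
    obtain ⟨n, hnA, hn⟩ := h _ (subshiftSystem_minimal hz) (subshiftPoint z) _
      (isOpen_subshiftCylinder z) ⟨_, (iterate_subshiftPoint_mem_subshiftCylinder_iff z m).2 hm⟩
    exact ⟨n, hnA, by rwa [← retTimes_subshiftCylinder]⟩
  · rintro h S hM x U hU ⟨u, hu⟩
    obtain ⟨r, hr, hrU, hz⟩ := exists_ball_uniformlyRecurrent_itinerary hM x hU hu
    obtain ⟨m, hm⟩ := hM.exists_iterate_mem_ball x u hr
    obtain ⟨n, hnA, hn⟩ := h _ hz ⟨m, by simpa [itinerary] using hm⟩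
    rw [posSupport_itinerary] at hn
    exact ⟨n, hnA, hn.1, hrU hn.2⟩

theorem mem_of_mem_of_notMem_symmDiff {A B : Set ℕ} {n : ℕ} (hA : n ∈ A)
    (hn : n ∉ (A \ B) ∪ (B \ A)) : n ∈ B :=
  by_contra fun hB => hn (Or.inl ⟨hA, hB⟩)

section Transfer

variable {A B : Set ℕ} (h : ¬ PiecewiseSyndetic ((A \ B) ∪ (B \ A)))
include h

theorem PointwiseRecurrent.of_symmDiff (hA : PointwiseRecurrent A) : PointwiseRecurrent B := by
  rw [pointwiseRecurrent_iff] at hA ⊢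
  intro z hz hz0
  obtain ⟨z', hz', hz'0, hsub⟩ := hz.exists_posSupport_subset_diff h hz0 (by omega)
  obtain ⟨n, hnA, hn⟩ := hA z' hz' hz'0
  exact ⟨n, mem_of_mem_of_notMem_symmDiff hnA (hsub hn).2, (hsub hn).1⟩

theorem DynThick.of_symmDiff (hA : DynThick A) : DynThick B := by
  rw [dynThick_iff] at hA ⊢
  rintro z hz ⟨m, hm⟩
  obtain ⟨m', hm', hm'D⟩ := hz.exists_eq_true_notMem hm h
  obtain ⟨z', hz', hz'm, hsub⟩ := hz.exists_posSupport_subset_diff h hm' fun _ => hm'D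
  obtain ⟨n, hnA, hn⟩ := hA z' hz' ⟨m', hz'm⟩
  exact ⟨n, mem_of_mem_of_notMem_symmDiff hnA (hsub hn).2, (hsub hn).1⟩

theorem DynSyndetic.of_symmDiff (hA : DynSyndetic A) : DynSyndetic B := by
  rw [dynSyndetic_iff] at hA ⊢
  obtain ⟨z, hz, ⟨m, hm⟩, hzA⟩ := hA
  obtain ⟨m', hm', hm'D⟩ := hz.exists_eq_true_notMem hm h
  obtain ⟨z', hz', hz'm, hsub⟩ := hz.exists_posSupport_subset_diff h hm' fun _ => hm'D
  exact ⟨z', hz', ⟨m', hz'm⟩,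
    fun n hn => mem_of_mem_of_notMem_symmDiff (hzA (hsub hn).1) (hsub hn).2⟩

theorem DynCentralSyndetic.of_symmDiff (hA : DynCentralSyndetic A) : DynCentralSyndetic B := by
  rw [dynCentralSyndetic_iff] at hA ⊢
  obtain ⟨z, hz, hz0, hzA⟩ := hA
  obtain ⟨z', hz', hz'0, hsub⟩ := hz.exists_posSupport_subset_diff h hz0 (by omega)
  exact ⟨z', hz', hz'0,
    fun n hn => mem_of_mem_of_notMem_symmDiff (hzA (hsub hn).1) (hsub hn).2⟩

end Transfer

theorem stable_under_non_piecewiseSyndetic_changes (A B : Set ℕ)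
    (h : ¬ PiecewiseSyndetic ((A \ B) ∪ (B \ A))) :
    (PointwiseRecurrent A ↔ PointwiseRecurrent B) ∧
    (DynThick A ↔ DynThick B) ∧
    (DynSyndetic A ↔ DynSyndetic B) ∧
    (DynCentralSyndetic A ↔ DynCentralSyndetic B) := by
  have h' : ¬ PiecewiseSyndetic ((B \ A) ∪ (A \ B)) := by rwa [Set.union_comm]
  exact ⟨⟨(·.of_symmDiff h), (·.of_symmDiff h')⟩, ⟨(·.of_symmDiff h), (·.of_symmDiff h')⟩,
    ⟨(·.of_symmDiff h), (·.of_symmDiff h')⟩, ⟨(·.of_symmDiff h), (·.of_symmDiff h')⟩⟩
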